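/- (Theorem 2) There exists a universal constant c > 0 such that for every N ≥ 2 and every collection of points x_1, …, x_N ∈ 𝕋², one has Σ_{i,j=1, i ≠ j}^N 1 / (1 + N ‖x_i − x_j‖²) ≥ c · N · log N. -/

import Mathlib

open scoped Real BigOperators
open MeasureTheory

noncomputable section

/-- The `d`-dimensional torus `ℝ^d/ℤ^d`. -/
abbrev Torus (d : ℕ) := Fin d → AddCircle (1 : ℝ)

/-- The torus (Euclidean) distance `min_{m ∈ ℤ^d} |x - y - m|`; each coordinate can be
minimized independently, giving the square root of the sum of squared circle distances. -/
def torusDist {d : ℕ} (x y : Torus d) : ℝ := Real.sqrt (∑ m, ‖x m - y m‖ ^ 2)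

/-!
Cut the torus into `4^m` squares of side `2^{-m}`. By Cauchy–Schwarz at least `N²/4^m` ordered
pairs of points share a square, hence lie at squared distance `≤ 2/4^m`. Weighting scale `m` by
`4^m`, a pair at squared distance `s` is counted at the scales `m < K = ⌊log₄ N⌋` with
`4^m s ≤ 2`; these weights form a geometric series dominated by its largest term, so they add up
to at most `11 · 4^K / (1 + N s)`. Hence each of the `K` scales contributes `≳ N` to the energy,
which is therefore `≳ N K ≈ N log N`. The trivial bound `s ≤ 1/2` gives energy `≥ N/2` and takes
care of small `N`, where `K` may vanish.
-/

open Finset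

lemma Fintype.card_sq_le_card_mul_card_filter_eq {ι κ : Type*} [Fintype ι] [DecidableEq κ]
    (f : ι → κ) {t : Finset κ} (hf : ∀ i, f i ∈ t) :
    Fintype.card ι ^ 2 ≤ #t * #{p : ι × ι | f p.1 = f p.2} := by
  have hfiber (c : κ) :
      #{p ∈ {p : ι × ι | f p.1 = f p.2} | f p.1 = c} = #{i | f i = c} ^ 2 := by
    rw [sq, ← card_product]
    congr 1
    ext p
    simp only [mem_filter, mem_univ, true_and, mem_product]
    constructor
    · rintro ⟨h, rfl⟩; exact ⟨rfl, h.symm⟩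
    · rintro ⟨h₁, h₂⟩; exact ⟨h₁.trans h₂.symm, h₁⟩
  calc Fintype.card ι ^ 2 = (∑ c ∈ t, #{i | f i = c}) ^ 2 := by
        rw [← card_univ, card_eq_sum_card_fiberwise fun i _ => hf i]
    _ ≤ #t * ∑ c ∈ t, #{i | f i = c} ^ 2 := sq_sum_le_card_mul_sum_sq
    _ = #t * #{p : ι × ι | f p.1 = f p.2} := by
        simp_rw [← hfiber]
        rw [sum_card_fiberwise_eq_card_filter, filter_true_of_mem fun p _ => hf p.1]

namespace AddCircle

def cellIndex (M : ℕ) (a : AddCircle (1 : ℝ)) : ℤ := ⌊(M : ℝ) * equivIco 1 0 a⌋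

lemma cellIndex_mem_Ico {M : ℕ} (hM : 0 < M) (a : AddCircle (1 : ℝ)) :
    cellIndex M a ∈ Ico (0 : ℤ) M := by
  have h₀ : (0 : ℝ) ≤ equivIco 1 0 a := (equivIco 1 0 a).2.1
  have h₁ : (equivIco 1 0 a : ℝ) < 1 := by simpa using (equivIco 1 0 a).2.2
  have hM' : (0 : ℝ) < M := Nat.cast_pos.2 hM
  refine mem_Ico.2 ⟨Int.floor_nonneg.2 (by positivity), Int.floor_lt.2 ?_⟩
  push_cast
  nlinarith

lemma norm_sub_le_of_cellIndex_eq {M : ℕ} (hM : 0 < M) {a b : AddCircle (1 : ℝ)}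
    (h : cellIndex M a = cellIndex M b) : ‖a - b‖ ≤ 1 / M := by
  set u : ℝ := ↑(equivIco 1 0 a)
  set v : ℝ := ↑(equivIco 1 0 b)
  have hM' : (0 : ℝ) < M := Nat.cast_pos.2 hM
  have huv : |(M : ℝ) * u - M * v| < 1 := Int.abs_sub_lt_one_of_floor_eq_floor h
  rw [← mul_sub, abs_mul, abs_of_pos hM', ← lt_div_iff₀' hM'] at huv
  calc ‖a - b‖ = ‖((u - v : ℝ) : AddCircle (1 : ℝ))‖ := by simp [u, v]
    _ ≤ |u - v| := QuotientAddGroup.norm_mk_le_norm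
    _ ≤ 1 / M := huv.le

end AddCircle

lemma torusDist_sq {d : ℕ} (x y : Torus d) : torusDist x y ^ 2 = ∑ m, ‖x m - y m‖ ^ 2 :=
  Real.sq_sqrt (by positivity)

lemma torusDist_sq_le {d : ℕ} (x y : Torus d) : torusDist x y ^ 2 ≤ d / 4 := by
  rw [torusDist_sq]
  calc ∑ m, ‖x m - y m‖ ^ 2 ≤ ∑ _m : Fin d, (1 / 2 : ℝ) ^ 2 := by
        gcongr with m
        simpa using AddCircle.norm_le_half_period (p := (1 : ℝ)) (x := x m - y m) one_ne_zero
    _ = d / 4 := by rw [sum_const, card_univ, Fintype.card_fin, nsmul_eq_mul]; ring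

lemma card_sq_le_pow_mul_card_close_pairs {ι : Type*} [Fintype ι] {d M : ℕ} (hM : 0 < M)
    (x : ι → Torus d) :
    Fintype.card ι ^ 2 ≤
      M ^ d * #{p : ι × ι | (M : ℝ) ^ 2 * torusDist (x p.1) (x p.2) ^ 2 ≤ d} := by
  let cell : ι → Fin d → ℤ := fun i m => AddCircle.cellIndex M (x i m)
  have hcell (i : ι) : cell i ∈ Fintype.piFinset fun _ => Ico (0 : ℤ) M :=
    Fintype.mem_piFinset.2 fun m => AddCircle.cellIndex_mem_Ico hM _
  refine (Fintype.card_sq_le_card_mul_card_filter_eq cell hcell).trans ?_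
  rw [Fintype.card_piFinset_const, Int.card_Ico, sub_zero, Int.toNat_natCast]
  gcongr with p hp
  intro hp
  rw [torusDist_sq, ← le_div_iff₀' (by positivity)]
  calc ∑ m, ‖x p.1 m - x p.2 m‖ ^ 2 ≤ ∑ _m : Fin d, (1 / M : ℝ) ^ 2 := by
        gcongr with m
        exact AddCircle.norm_sub_le_of_cellIndex_eq hM (congrFun hp m)
    _ = d / M ^ 2 := by rw [sum_const, card_univ, Fintype.card_fin, nsmul_eq_mul]; ring

lemma mul_sum_ite_pow_four_le {K : ℕ} {n s a : ℝ} (hn₀ : 0 ≤ n) (hn : n ≤ 4 ^ (K + 1))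
    (hs : 0 ≤ s) (ha : 0 ≤ a) :
    (1 + n * s) * ∑ m ∈ range K, (if 4 ^ m * s ≤ a then (4 : ℝ) ^ m else 0)
      ≤ (1 + 16 * a) / 3 * 4 ^ K := by
  rw [← sum_filter]
  set A := {m ∈ range K | (4 : ℝ) ^ m * s ≤ a}
  rcases A.eq_empty_or_nonempty with hA | hA
  · rw [hA, sum_empty, mul_zero]; positivity
  obtain ⟨hjK, hj⟩ := mem_filter.1 (A.max'_mem hA)
  set j := A.max' hA
  have hsum : ∑ m ∈ A, (4 : ℝ) ^ m ≤ 4 / 3 * 4 ^ j :=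
    calc ∑ m ∈ A, (4 : ℝ) ^ m ≤ ∑ m ∈ range (j + 1), (4 : ℝ) ^ m :=
          sum_le_sum_of_subset_of_nonneg
            (fun m hm => mem_range.2 (Nat.lt_succ_of_le (A.le_max' m hm))) (by intros; positivity)
      _ = (4 ^ (j + 1) - 1) / 3 := by rw [geom_sum_eq (by norm_num)]; norm_num
      _ ≤ 4 / 3 * 4 ^ j := by rw [pow_succ]; linarith
  have hjK' : (4 : ℝ) ^ j * 4 ≤ 4 ^ K := by
    rw [← pow_succ]; exact pow_le_pow_right₀ (by norm_num) (mem_range.1 hjK)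
  have hns : n * (4 ^ j * s) ≤ 4 ^ (K + 1) * a :=
    mul_le_mul hn hj (by positivity) (by positivity)
  calc (1 + n * s) * ∑ m ∈ A, (4 : ℝ) ^ m ≤ (1 + n * s) * (4 / 3 * 4 ^ j) := by
        gcongr
    _ = 4 / 3 * (4 ^ j + n * (4 ^ j * s)) := by ring
    _ ≤ 4 / 3 * (4 ^ K / 4 + 4 ^ (K + 1) * a) := by gcongr; linarith
    _ = (1 + 16 * a) / 3 * 4 ^ K := by ring

def pairEnergy {d N : ℕ} (x : Fin N → Torus d) : ℝ :=
  ∑ i, ∑ j, if i = j then 0 else 1 / (1 + (N : ℝ) * torusDist (x i) (x j) ^ 2)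

lemma pairEnergy_eq_sum_offDiag {d N : ℕ} (x : Fin N → Torus d) :
    pairEnergy x = ∑ p ∈ univ.offDiag, 1 / (1 + (N : ℝ) * torusDist (x p.1) (x p.2) ^ 2) := by
  have hoff : (univ : Finset (Fin N)).offDiag = ({p : Fin N × Fin N | p.1 ≠ p.2} : Finset _) := by
    ext; simp
  rw [pairEnergy, ← sum_product', univ_product_univ, hoff, sum_filter]
  simp_rw [ite_not]

lemma mul_sub_one_div_le_pairEnergy {d N : ℕ} (x : Fin N → Torus d) :
    N * (N - 1) / (1 + N * d / 4 : ℝ) ≤ pairEnergy x := by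
  rw [pairEnergy_eq_sum_offDiag]
  calc N * (N - 1) / (1 + N * d / 4 : ℝ) = ∑ _p ∈ univ.offDiag, 1 / (1 + N * d / 4 : ℝ) := by
        rw [sum_const, offDiag_card, card_univ, Fintype.card_fin, nsmul_eq_mul]
        push_cast [Nat.cast_sub (Nat.le_mul_self N)]
        ring
    _ ≤ _ := sum_le_sum fun p _ => one_div_le_one_div_of_le (by positivity) <| by
        have := torusDist_sq_le (x p.1) (x p.2)
        rw [mul_div_assoc]; gcongr

lemma half_le_pairEnergy {N : ℕ} (hN : 2 ≤ N) (x : Fin N → Torus 2) :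
    (N : ℝ) / 2 ≤ pairEnergy x := by
  refine le_trans ?_ (mul_sub_one_div_le_pairEnergy x)
  have hN' : (2 : ℝ) ≤ N := by exact_mod_cast hN
  rw [le_div_iff₀ (by positivity)]
  nlinarith

lemma sq_le_pow_four_mul_card_close_offDiag {N : ℕ} (x : Fin N → Torus 2) (m : ℕ) :
    (N : ℝ) ^ 2 ≤
      4 ^ m * (#{p ∈ univ.offDiag | 4 ^ m * torusDist (x p.1) (x p.2) ^ 2 ≤ 2} + N) := by
  have h4 : ((2 : ℝ) ^ m) ^ 2 = 4 ^ m := by rw [← pow_mul, mul_comm, pow_mul]; norm_num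
  have h4' : ((2 : ℕ) ^ m) ^ 2 = 4 ^ m := by rw [← pow_mul, mul_comm, pow_mul]; rfl
  have hclose := card_sq_le_pow_mul_card_close_pairs (pow_pos two_pos m) x
  simp only [Fintype.card_fin, Nat.cast_pow, Nat.cast_ofNat, h4, h4'] at hclose
  have hsplit :
      ({p : Fin N × Fin N | 4 ^ m * torusDist (x p.1) (x p.2) ^ 2 ≤ 2} : Finset (Fin N × Fin N)) ⊆
        {p ∈ (univ : Finset (Fin N)).offDiag | 4 ^ m * torusDist (x p.1) (x p.2) ^ 2 ≤ 2} ∪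
          (univ : Finset (Fin N)).diag := by
    intro p hp
    by_cases hpp : p.1 = p.2 <;> simp_all
  have hcard := (card_le_card hsplit).trans (card_union_le _ _)
  rw [diag_card, card_univ, Fintype.card_fin] at hcard
  exact_mod_cast hclose.trans (Nat.mul_le_mul_left _ hcard)

lemma nat_log_mul_le_pairEnergy {N : ℕ} (hN : N ≠ 0) (x : Fin N → Torus 2) :
    3 / 44 * Nat.log 4 N * N ≤ pairEnergy x := by
  set K := Nat.log 4 N
  set s : Fin N × Fin N → ℝ := fun p => torusDist (x p.1) (x p.2) ^ 2
  have hKN : (4 : ℝ) ^ K ≤ N := by exact_mod_cast Nat.pow_log_le_self 4 hN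
  have hNK : (N : ℝ) ≤ 4 ^ (K + 1) := by
    exact_mod_cast (Nat.lt_pow_succ_log_self (by norm_num) N).le
  have hlevel (m : ℕ) (hm : m ∈ range K) :
      3 / 4 * N * 4 ^ K ≤ 4 ^ m * (#{p ∈ univ.offDiag | 4 ^ m * s p ≤ 2} : ℝ) := by
    have hcount := sq_le_pow_four_mul_card_close_offDiag x m
    have hmK : (4 : ℝ) ^ m * 4 ≤ 4 ^ K := by
      rw [← pow_succ]; exact pow_le_pow_right₀ (by norm_num) (mem_range.1 hm)
    nlinarith
  have hpair (p : Fin N × Fin N) :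
      ∑ m ∈ range K, (if 4 ^ m * s p ≤ 2 then (4 : ℝ) ^ m else 0) ≤
        11 * 4 ^ K * (1 / (1 + N * s p)) := by
    have := mul_sum_ite_pow_four_le (a := 2) (Nat.cast_nonneg N) hNK
      (sq_nonneg (torusDist (x p.1) (x p.2))) zero_le_two
    rw [mul_one_div, le_div_iff₀' (by positivity)]
    linarith
  calc 3 / 44 * K * N = 1 / (11 * 4 ^ K) * ∑ _m ∈ range K, 3 / 4 * (N : ℝ) * 4 ^ K := by
        rw [sum_const, card_range, nsmul_eq_mul]; field_simp; ring
    _ ≤ 1 / (11 * 4 ^ K) *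
          ∑ m ∈ range K, 4 ^ m * (#{p ∈ univ.offDiag | 4 ^ m * s p ≤ 2} : ℝ) := by
        gcongr 1 / (11 * 4 ^ K) * ?_
        exact sum_le_sum hlevel
    _ = 1 / (11 * 4 ^ K) *
          ∑ p ∈ univ.offDiag, ∑ m ∈ range K, (if 4 ^ m * s p ≤ 2 then (4 : ℝ) ^ m else 0) := by
        rw [sum_comm]
        simp only [sum_ite, sum_const_zero, add_zero, sum_const, nsmul_eq_mul, mul_comm]
    _ ≤ 1 / (11 * 4 ^ K) * ∑ p ∈ univ.offDiag, 11 * 4 ^ K * (1 / (1 + N * s p)) := by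
        gcongr 1 / (11 * 4 ^ K) * ?_
        exact sum_le_sum fun p _ => hpair p
    _ = pairEnergy x := by
        rw [pairEnergy_eq_sum_offDiag, ← mul_sum, ← mul_assoc, one_div_mul_cancel (by positivity),
          one_mul]

lemma Real.log_natCast_lt_nat_log_add_one_mul {b n : ℕ} (hb : 1 < b) (hn : n ≠ 0) :
    Real.log n < (Nat.log b n + 1) * Real.log b := by
  have hpow : (n : ℝ) < (b : ℝ) ^ (Nat.log b n + 1) := by
    exact_mod_cast Nat.lt_pow_succ_log_self hb n
  calc Real.log n < Real.log ((b : ℝ) ^ (Nat.log b n + 1)) :=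
        Real.log_lt_log (by positivity) hpow
    _ = (Nat.log b n + 1) * Real.log b := by rw [Real.log_pow]; push_cast; ring

/-- Theorem 2. -/
theorem theorem_two :
    ∃ c : ℝ, 0 < c ∧ ∀ (N : ℕ), 2 ≤ N → ∀ x : Fin N → Torus 2,
      c * N * Real.log N ≤
        ∑ i, ∑ j, if i = j then 0 else 1 / (1 + (N : ℝ) * torusDist (x i) (x j) ^ 2) := by
  refine ⟨1 / 25, by norm_num, fun N hN x => ?_⟩
  have hN₀ : N ≠ 0 := by omega
  have hlog4 : Real.log 4 < 1.39 := by
    rw [show (4 : ℝ) = 2 ^ 2 by norm_num, Real.log_pow]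
    linarith [Real.log_two_lt_d9]
  have hlog : Real.log N ≤ (Nat.log 4 N + 1) * 1.39 :=
    (Real.log_natCast_lt_nat_log_add_one_mul (b := 4) (by norm_num) hN₀).le.trans
      (by gcongr; exact_mod_cast hlog4.le)
  have hNlog := mul_le_mul_of_nonneg_left hlog (Nat.cast_nonneg N)
  have hhalf := half_le_pairEnergy hN x
  have hlevels := nat_log_mul_le_pairEnergy hN₀ x
  rw [pairEnergy] at hhalf hlevels
  linarith
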